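/- Let P ⊂ ℝ^n be a Gorenstein polytope of index k, let m be the unique lattice point in the relative interior of kP, and let p := (1/k)m. Then pllenv(cone P) = (plenv(cone P))_ℤ. -/

import Mathlib

open Set Pointwise
open scoped Classical

noncomputable section

namespace ArxivFreeSum

/-- A point of `ℝ^m` is an integer lattice point iff all coordinates are integers. -/
def IsLat {m : ℕ} (x : Fin m → ℝ) : Prop := ∀ i, ∃ z : ℤ, x i = (z : ℝ)

/-- The set of integer lattice points of a set `S`. -/
def latt {m : ℕ} (S : Set (Fin m → ℝ)) : Set (Fin m → ℝ) := {x | x ∈ S ∧ IsLat x}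

variable {n : ℕ}

/-- The affine embedding `α : ℝ^n → ℝ^{n+1}`, `a ↦ (a, 1)`. -/
def emb (a : Fin n → ℝ) : Fin (n + 1) → ℝ := Fin.snoc a 1

/-- The cone over `K`: all nonnegative multiples of `α(K)`. -/
def cone (K : Set (Fin n → ℝ)) : Set (Fin (n + 1) → ℝ) :=
  {x | ∃ l : ℝ, ∃ a ∈ K, 0 ≤ l ∧ x = l • emb a}

/-- The last standard basis vector `e_{n+1}` of `ℝ^{n+1}`. -/
def eLast (n : ℕ) : Fin (n + 1) → ℝ := Pi.single (Fin.last n) 1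

/-- The vertical projection `ε_J` onto the lower envelope of `cone J`. -/
def eps (J : Set (Fin n → ℝ)) (x : Fin (n + 1) → ℝ) : Fin (n + 1) → ℝ :=
  x - sSup {l : ℝ | x - l • eLast n ∈ cone J} • eLast n

/-- The lower envelope of `cone J`. -/
def lenv (J : Set (Fin n → ℝ)) : Set (Fin (n + 1) → ℝ) := eps J '' cone J

/-- The lower lattice envelope of `cone J`. -/
def llenv (J : Set (Fin n → ℝ)) : Set (Fin (n + 1) → ℝ) := eps J '' latt (cone J)

/-- `J ⊕ K` is a free sum. -/
def IsFreeSum (J K : Set (Fin n → ℝ)) : Prop :=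
  (0 : Fin n → ℝ) ∈ J ∧ (0 : Fin n → ℝ) ∈ K ∧
    ∀ m : Fin n → ℝ, m ∈ Submodule.span ℝ (J ∪ K) → IsLat m →
      ∃! q : (Fin n → ℝ) × (Fin n → ℝ),
        (q.1 ∈ Submodule.span ℝ J ∧ IsLat q.1) ∧
        (q.2 ∈ Submodule.span ℝ K ∧ IsLat q.2) ∧ m = q.1 + q.2

/-- `N_{J,K}(m)`: the number of pairs of lattice points of `cone J` and `cone K` summing
to `m`. -/
def Npairs (J K : Set (Fin n → ℝ)) (m : Fin (n + 1) → ℤ) : ℕ :=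
  Set.ncard {q : (Fin (n + 1) → ℝ) × (Fin (n + 1) → ℝ) |
    q.1 ∈ latt (cone J) ∧ q.2 ∈ latt (cone K) ∧ q.1 + q.2 = fun i => (m i : ℝ)}

/-- The coefficientwise form of the multivariate Braun equation
`σ_{cone(J⊕K)} = (1 - z_{n+1}) σ_{cone J} σ_{cone K}`. -/
def BraunEq (J K : Set (Fin n → ℝ)) : Prop :=
  ∀ m : Fin (n + 1) → ℤ,
    (Npairs J K m : ℤ) - (Npairs J K (m - Pi.single (Fin.last n) 1) : ℤ) =
      if (fun i => (m i : ℝ)) ∈ cone (convexHull ℝ (J ∪ K)) then 1 else 0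

/-- A rational polytope: convex hull of finitely many rational points. -/
def IsRatPolytope (P : Set (Fin n → ℝ)) : Prop :=
  ∃ V : Finset (Fin n → ℝ), (∀ v ∈ V, ∀ i, ∃ q : ℚ, v i = (q : ℝ)) ∧
    P = convexHull ℝ (V : Set (Fin n → ℝ))

/-- A lattice polytope: convex hull of finitely many lattice points. -/
def IsLatPolytope (P : Set (Fin n → ℝ)) : Prop :=
  ∃ V : Finset (Fin n → ℝ), (∀ v ∈ V, IsLat v) ∧ P = convexHull ℝ (V : Set (Fin n → ℝ))

/-- The polar dual `P^∨ ⊆ (lin P)^*` of a polytope `P` containing the origin. -/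
def dualSet (P : Set (Fin n → ℝ)) : Set (Module.Dual ℝ (Submodule.span ℝ P)) :=
  {φ | ∀ a : Submodule.span ℝ P, (a : Fin n → ℝ) ∈ P → φ a ≤ 1}

/-- Membership in the dual integer lattice `(lin P)^*_ℤ`. -/
def IsDualLatticePt (P : Set (Fin n → ℝ)) (φ : Module.Dual ℝ (Submodule.span ℝ P)) : Prop :=
  ∀ a : Submodule.span ℝ P, IsLat (a : Fin n → ℝ) → ∃ z : ℤ, φ a = (z : ℝ)

/-- `P^∨` is a lattice polyhedron: every vertex (= extreme point) of `P^∨` lies in the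
dual integer lattice. -/
def DualIsLatticePolyhedron (P : Set (Fin n → ℝ)) : Prop :=
  ∀ φ ∈ Set.extremePoints ℝ (dualSet P), IsDualLatticePt P φ

/-- `den(P^∨)`: the smallest positive integer `d` such that `d • P^∨` is a lattice
polyhedron. -/
def dualDen (P : Set (Fin n → ℝ)) : ℕ :=
  sInf {d : ℕ | 0 < d ∧ ∀ φ ∈ Set.extremePoints ℝ (dualSet P), IsDualLatticePt P ((d : ℝ) • φ)}

/-- `L_P(k)`, with `L_P(0) = 1`. -/
def ehr (P : Set (Fin n → ℝ)) (k : ℕ) : ℕ :=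
  if k = 0 then 1 else Set.ncard (latt ((k : ℝ) • P))

/-- The coefficientwise form of `Ehr_{P⊕Q}(t) = (1-t) Ehr_P(t) Ehr_Q(t)`. -/
def EhrEq (P Q : Set (Fin n → ℝ)) : Prop :=
  ∀ k : ℕ,
    (ehr (convexHull ℝ (P ∪ Q)) k : ℤ) =
      (∑ i ∈ Finset.range (k + 1), (ehr P i : ℤ) * (ehr Q (k - i) : ℤ)) -
        ∑ i ∈ Finset.range k, (ehr P i : ℤ) * (ehr Q (k - 1 - i) : ℤ)

/-- `P` is reflexive: a lattice polytope containing the origin in its relative interior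
whose polar dual is a lattice polytope. -/
def IsReflexive (P : Set (Fin n → ℝ)) : Prop :=
  IsLatPolytope P ∧ (0 : Fin n → ℝ) ∈ intrinsicInterior ℝ P ∧ DualIsLatticePolyhedron P

/-- `P` is Gorenstein of index `k`. -/
def IsGorenstein (P : Set (Fin n → ℝ)) (k : ℕ) : Prop :=
  IsLatPolytope P ∧ 0 < k ∧
    ∃ m : Fin n → ℝ, IsLat m ∧ IsReflexive ((fun x => x - m) '' ((k : ℝ) • P))

/-- `p` is a rational point. -/
def IsRatPt (p : Fin n → ℝ) : Prop := ∀ i, ∃ q : ℚ, p i = (q : ℝ)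

/-- Membership in the lattice `Λ^p` generated by `e_1, …, e_n` and `p`. -/
def InLambda (p x : Fin n → ℝ) : Prop :=
  ∃ (z : Fin n → ℤ) (c : ℤ), x = (fun i => (z i : ℝ)) + (c : ℝ) • p

/-- `den(p)`: the lcm of the denominators of the coordinates of `p`, i.e. the least
positive integer `r` with `r • p` a lattice point. -/
def denPt (p : Fin n → ℝ) : ℕ := sInf {r : ℕ | 0 < r ∧ IsLat ((r : ℝ) • p)}

/-- The projection `ε^p_J` parallel to `α(p)` onto the `p`-lower envelope of `cone J`. -/
def epsP (p : Fin n → ℝ) (J : Set (Fin n → ℝ)) (x : Fin (n + 1) → ℝ) : Fin (n + 1) → ℝ :=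
  x - sSup {l : ℝ | x - l • emb p ∈ cone J} • emb p

/-- The `p`-lower envelope of `cone J`. -/
def plenv (p : Fin n → ℝ) (J : Set (Fin n → ℝ)) : Set (Fin (n + 1) → ℝ) := epsP p J '' cone J

/-- The `p`-lower lattice envelope of `cone J`. -/
def pllenv (p : Fin n → ℝ) (J : Set (Fin n → ℝ)) : Set (Fin (n + 1) → ℝ) :=
  epsP p J '' latt (cone J)

/-- `J ⊕ K` is an affine free sum with common (rational) point `p`. -/
def IsAffineFreeSum (J K : Set (Fin n → ℝ)) (p : Fin n → ℝ) : Prop :=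
  IsRatPt p ∧ p ∈ J ∧ p ∈ K ∧
    ((affineSpan ℝ J : Set (Fin n → ℝ)) ∩ (affineSpan ℝ K : Set (Fin n → ℝ)) = {p}) ∧
    ∀ m : Fin n → ℝ, m ∈ Submodule.span ℝ ((fun x => x - p) '' (J ∪ K)) → InLambda p m →
      ∃! q : (Fin n → ℝ) × (Fin n → ℝ),
        (q.1 ∈ Submodule.span ℝ ((fun x => x - p) '' J) ∧ InLambda p q.1) ∧
        (q.2 ∈ Submodule.span ℝ ((fun x => x - p) '' K) ∧ InLambda p q.2) ∧ m = q.1 + q.2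

/-!
Put `Q := k P - m`, a reflexive polytope, and write a lattice point of `cone P` as `x = (x', h)`.
Lowering `x` by `l • α(m / k)` stays in `cone P` exactly when `w := k x' - h m ∈ (h - l) Q`, so
`ε^p` lowers `x` by `h - s`, where `s` is the least factor with `w ∈ s Q`; the least factor is
attained because `cone P` is closed. If `s = 0` then `ε^p(x) = 0`. If `s > 0`, Hahn–Banach and
Krein–Milman give a vertex `φ` of `Q^∨` with `φ(w) = s`, and, being extreme, `φ` equals `1` at
some vertex `k v - m` of `Q`. As `φ` is integral on lattice points and
`w = k (x' - h v) + h (k v - m)`, we get `s = k z + h` with `z ∈ ℤ`, so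
`ε^p(x) = x + z (m, k)` is a lattice point. Conversely `ε^p` is idempotent on `cone P`, so every
lattice point of the `p`-lower envelope is its own image.
-/

open Topology

lemma IsLat.add {x y : Fin n → ℝ} (hx : IsLat x) (hy : IsLat y) : IsLat (x + y) := fun i => by
  obtain ⟨a, ha⟩ := hx i
  obtain ⟨b, hb⟩ := hy i
  exact ⟨a + b, by simp [ha, hb]⟩

lemma IsLat.sub {x y : Fin n → ℝ} (hx : IsLat x) (hy : IsLat y) : IsLat (x - y) := fun i => by
  obtain ⟨a, ha⟩ := hx i
  obtain ⟨b, hb⟩ := hy i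
  exact ⟨a - b, by simp [ha, hb]⟩

lemma IsLat.intCast_smul {x : Fin n → ℝ} (hx : IsLat x) (c : ℤ) : IsLat ((c : ℝ) • x) :=
  fun i => by
    obtain ⟨a, ha⟩ := hx i
    exact ⟨c * a, by simp [ha]⟩

lemma isLat_zero : IsLat (0 : Fin n → ℝ) := fun _ => ⟨0, by simp⟩

lemma IsLat.init {x : Fin (n + 1) → ℝ} (hx : IsLat x) : IsLat (Fin.init x) :=
  fun j => hx j.castSucc

lemma IsLatPolytope.isCompact {P : Set (Fin n → ℝ)} (hP : IsLatPolytope P) : IsCompact P := by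
  obtain ⟨V, -, rfl⟩ := hP
  exact V.finite_toSet.isCompact_convexHull (𝕜 := ℝ)

@[simp] lemma emb_last (a : Fin n → ℝ) : emb a (Fin.last n) = 1 := Fin.snoc_last _ _

@[simp] lemma emb_castSucc (a : Fin n → ℝ) (j : Fin n) : emb a j.castSucc = a j :=
  Fin.snoc_castSucc _ _ _

lemma continuous_emb : Continuous (emb : (Fin n → ℝ) → Fin (n + 1) → ℝ) :=
  continuous_id.finSnoc (A := fun _ => ℝ) continuous_const

lemma eq_smul_emb_iff {y : Fin (n + 1) → ℝ} {t : ℝ} {a : Fin n → ℝ} :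
    y = t • emb a ↔ y (Fin.last n) = t ∧ Fin.init y = t • a := by
  constructor
  · rintro rfl
    exact ⟨by simp, funext fun j => by simp [Fin.init]⟩
  · rintro ⟨hlast, hinit⟩
    funext i
    refine Fin.lastCases ?_ (fun j => ?_) i
    · simp [hlast]
    · simpa [Fin.init] using congrFun hinit j

lemma mem_cone_iff {J : Set (Fin n → ℝ)} {y : Fin (n + 1) → ℝ} :
    y ∈ cone J ↔ 0 ≤ y (Fin.last n) ∧ ∃ a ∈ J, y = y (Fin.last n) • emb a := by
  constructor
  · rintro ⟨l, a, ha, hl, rfl⟩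
    exact ⟨by simpa using hl, a, ha, by simp⟩
  · rintro ⟨hy, a, ha, hya⟩
    exact ⟨_, a, ha, hy, hya⟩

lemma isClosed_cone {J : Set (Fin n → ℝ)} (hJ : IsCompact J) : IsClosed (cone J) := by
  have := isCompact_iff_compactSpace.1 hJ
  have hcone : cone J = Prod.fst '' {q : (Fin (n + 1) → ℝ) × J |
      0 ≤ q.1 (Fin.last n) ∧ q.1 = q.1 (Fin.last n) • emb q.2} := by
    ext y
    simp [mem_cone_iff]
  have hlast : Continuous fun q : (Fin (n + 1) → ℝ) × J => q.1 (Fin.last n) :=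
    (continuous_apply _).comp continuous_fst
  rw [hcone]
  exact isClosedMap_fst_of_compactSpace _ ((isClosed_le continuous_const hlast).inter
    (isClosed_eq continuous_fst
      (hlast.smul (continuous_emb.comp (continuous_subtype_val.comp continuous_snd)))))

section Envelope

variable {J : Set (Fin n → ℝ)} (p : Fin n → ℝ)

lemma bddAbove_setOf_sub_smul_emb_mem_cone (x : Fin (n + 1) → ℝ) :
    BddAbove {l : ℝ | x - l • emb p ∈ cone J} :=
  ⟨x (Fin.last n), fun l hl => by simpa using (mem_cone_iff.1 hl).1⟩

lemma isGreatest_setOf_sub_smul_emb_mem_cone (hJ : IsCompact J) {x : Fin (n + 1) → ℝ}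
    (hx : x ∈ cone J) :
    IsGreatest {l : ℝ | x - l • emb p ∈ cone J}
      (sSup {l : ℝ | x - l • emb p ∈ cone J}) := by
  have hclosed : IsClosed {l : ℝ | x - l • emb p ∈ cone J} :=
    (isClosed_cone hJ).preimage (continuous_const.sub (continuous_id.smul continuous_const))
  exact ⟨hclosed.csSup_mem ⟨0, by simpa using hx⟩ (bddAbove_setOf_sub_smul_emb_mem_cone p x),
    fun l hl => le_csSup (bddAbove_setOf_sub_smul_emb_mem_cone p x) hl⟩

lemma epsP_mem_cone (hJ : IsCompact J) {x : Fin (n + 1) → ℝ} (hx : x ∈ cone J) :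
    epsP p J x ∈ cone J :=
  (isGreatest_setOf_sub_smul_emb_mem_cone p hJ hx).1

lemma epsP_epsP (hJ : IsCompact J) {x : Fin (n + 1) → ℝ} (hx : x ∈ cone J) :
    epsP p J (epsP p J x) = epsP p J x := by
  obtain ⟨-, hmax⟩ := isGreatest_setOf_sub_smul_emb_mem_cone p hJ hx
  set lam := sSup {l : ℝ | x - l • emb p ∈ cone J}
  have hzero : IsGreatest {l : ℝ | epsP p J x - l • emb p ∈ cone J} 0 := by
    refine ⟨by simpa using epsP_mem_cone p hJ hx, fun l hl => ?_⟩
    have : lam + l ≤ lam :=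
      hmax (by simpa only [Set.mem_ofPred_eq, epsP, sub_sub, ← add_smul] using hl)
    linarith
  simp only [epsP] at hzero ⊢
  rw [hzero.csSup_eq, zero_smul, sub_zero]

theorem pllenv_eq_latt_plenv (hJ : IsCompact J)
    (hlat : ∀ x ∈ latt (cone J), IsLat (epsP p J x)) : pllenv p J = latt (plenv p J) := by
  ext x
  constructor
  · rintro ⟨y, hy, rfl⟩
    exact ⟨⟨y, hy.1, rfl⟩, hlat y hy⟩
  · rintro ⟨⟨y, hy, rfl⟩, hyLat⟩
    exact ⟨epsP p J y, ⟨epsP_mem_cone p hJ hy, hyLat⟩, epsP_epsP p hJ hy⟩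

end Envelope

section Polar

variable {F : Type*} [NormedAddCommGroup F] [NormedSpace ℝ F]

/-- One-sided polar: unlike `NormedSpace.polar`, it bounds `f c` rather than `‖f c‖`. -/
def polarLe (C : Set F) : Set (F →L[ℝ] ℝ) := {f | ∀ c ∈ C, f c ≤ 1}

lemma zero_mem_polarLe (C : Set F) : (0 : F →L[ℝ] ℝ) ∈ polarLe C := fun _ _ => by simp

lemma isClosed_polarLe (C : Set F) : IsClosed (polarLe C) := by
  simp only [polarLe, Set.ofPred_forall]
  exact isClosed_biInter fun c _ => isClosed_le (continuous_eval_const c) continuous_const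

lemma isCompact_polarLe [FiniteDimensional ℝ F] {C : Set F} (hC : C ∈ 𝓝 0) :
    IsCompact (polarLe C) := by
  obtain ⟨ε, hε, hball⟩ := Metric.nhds_basis_closedBall.mem_iff.1 hC
  refine Metric.isCompact_of_isClosed_isBounded (isClosed_polarLe C)
    (isBounded_iff_forall_norm_le.2 ⟨1 / ε, fun f hf => ?_⟩)
  refine ContinuousLinearMap.opNorm_bound_of_ball_bound hε 1 f fun z hz => ?_
  have hneg : -z ∈ Metric.closedBall (0 : F) ε := by simpa using hz
  have hle := hf z (hball hz)
  have hle_neg := hf (-z) (hball hneg)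
  rw [map_neg] at hle_neg
  exact abs_le.2 ⟨by linarith, hle⟩

lemma mem_smul_of_forall_mem_polarLe_le {C : Set F} (hconv : Convex ℝ C) (hclosed : IsClosed C)
    (h0 : (0 : F) ∈ C) {u : F} {s : ℝ} (hs : 0 < s) (hu : ∀ f ∈ polarLe C, f u ≤ s) :
    u ∈ s • C := by
  by_contra hnot
  have hscaled : s⁻¹ • u ∉ C := fun h => hnot ⟨_, h, smul_inv_smul₀ hs.ne' u⟩
  obtain ⟨g, r, hgC, hgu⟩ := geometric_hahn_banach_closed_point hconv hclosed hscaled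
  have hr : 0 < r := by simpa using hgC 0 h0
  have hpolar : r⁻¹ • g ∈ polarLe C := fun c hc => by
    simpa [inv_mul_le_iff₀ hr] using (hgC c hc).le
  have hle : r⁻¹ * g u ≤ s := by simpa using hu _ hpolar
  rw [map_smul, smul_eq_mul, ← div_eq_inv_mul, lt_div_iff₀ hs] at hgu
  rw [← div_eq_inv_mul, div_le_iff₀ hr] at hle
  linarith

lemma exists_mem_extremePoints_polarLe_apply_eq [FiniteDimensional ℝ F] {C : Set F}
    (hconv : Convex ℝ C) (hclosed : IsClosed C) (hC : C ∈ 𝓝 0) {u : F} {s : ℝ} (hs : 0 < s)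
    (hleast : IsLeast {t | 0 ≤ t ∧ u ∈ t • C} s) :
    ∃ f ∈ extremePoints ℝ (polarLe C), f u = s := by
  have hcomp := isCompact_polarLe hC
  obtain ⟨f₁, hf₁, hmax⟩ :=
    hcomp.exists_isMaxOn ⟨0, zero_mem_polarLe C⟩ (continuous_eval_const u).continuousOn
  have hexp : IsExposed ℝ (polarLe C) {f ∈ polarLe C | ∀ g ∈ polarLe C, g u ≤ f u} :=
    fun _ => ⟨ContinuousLinearMap.apply ℝ ℝ u, rfl⟩
  obtain ⟨f, hf⟩ := (hexp.isCompact hcomp).extremePoints_nonempty ⟨f₁, hf₁, fun g hg => hmax hg⟩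
  refine ⟨f, hexp.isExtreme.extremePoints_subset_extremePoints hf, le_antisymm ?_ ?_⟩
  · obtain ⟨c, hc, rfl⟩ := hleast.1.2
    simpa using mul_le_mul_of_nonneg_left (hf.1.1 c hc) hs.le
  · by_contra! hlt
    have hs' : 0 < max (f u) (s / 2) := lt_max_of_lt_right (half_pos hs)
    have hmem := mem_smul_of_forall_mem_polarLe_le hconv hclosed (mem_of_mem_nhds hC) hs'
      fun g hg => (hf.1.2 g hg).trans (le_max_left _ _)
    exact (max_lt hlt (half_lt_self hs)).not_ge (hleast.2 ⟨hs'.le, hmem⟩)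

lemma exists_apply_eq_one_of_mem_extremePoints_polarLe {C : Set F} (hC : IsCompact C)
    (hCne : C.Nonempty) {f : F →L[ℝ] ℝ} (hf : f ∈ extremePoints ℝ (polarLe C)) (hf0 : f ≠ 0) :
    ∃ c ∈ C, f c = 1 := by
  obtain ⟨c, hc, hmax⟩ := hC.exists_isMaxOn hCne f.continuous.continuousOn
  refine ⟨c, hc, (hf.1 c hc).antisymm (not_lt.1 fun hlt => hf0 ?_)⟩
  -- otherwise `f` is a proper convex combination of `0` and the rescaled `t⁻¹ • f ∈ C°`
  set t := max (f c) (1 / 2)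
  have ht : 0 < t := lt_max_of_lt_right one_half_pos
  have ht1 : t < 1 := max_lt hlt one_half_lt_one
  have hscaled : t⁻¹ • f ∈ polarLe C := fun a ha => by
    rw [smul_apply, smul_eq_mul, inv_mul_le_iff₀ ht, mul_one]
    exact (hmax ha).trans (le_max_left _ _)
  have hseg : f ∈ openSegment ℝ 0 (t⁻¹ • f) :=
    ⟨1 - t, t, by linarith, ht, by ring, by simp [smul_inv_smul₀ ht.ne']⟩
  exact (hf.2 (zero_mem_polarLe C) hscaled hseg).symm

end Polar

section DualSet

variable {Q : Set (Fin n → ℝ)}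

lemma mem_smul_preimage_val_iff {t : ℝ} {u : Submodule.span ℝ Q} :
    u ∈ t • (Subtype.val ⁻¹' Q : Set (Submodule.span ℝ Q)) ↔ (u : Fin n → ℝ) ∈ t • Q := by
  constructor
  · rintro ⟨c, hc, rfl⟩
    exact ⟨c, hc, rfl⟩
  · rintro ⟨q, hq, hqu⟩
    exact ⟨⟨q, Submodule.subset_span hq⟩, hq, Subtype.ext hqu⟩

lemma preimage_val_mem_nhds_zero (h0 : (0 : Fin n → ℝ) ∈ intrinsicInterior ℝ Q) :
    (Subtype.val ⁻¹' Q : Set (Submodule.span ℝ Q)) ∈ 𝓝 0 := by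
  obtain ⟨y, hy, hy0⟩ := h0
  obtain ⟨U, hU, hUQ⟩ := (mem_nhds_subtype _ _ _).1 (mem_interior_iff_mem_nhds.1 hy)
  rw [hy0] at hU
  have h0A : (0 : Fin n → ℝ) ∈ affineSpan ℝ Q := hy0 ▸ y.2
  have hspan : Submodule.span ℝ Q ≤ (affineSpan ℝ Q).direction :=
    Submodule.span_le.2 fun q hq => by
      simpa using AffineSubspace.vsub_mem_direction (subset_affineSpan ℝ Q hq) h0A
  refine (mem_nhds_subtype _ _ _).2 ⟨U, hU, fun z hz => ?_⟩
  have hzA : (z : Fin n → ℝ) ∈ affineSpan ℝ Q := by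
    simpa using AffineSubspace.vadd_mem_of_mem_direction (hspan z.2) h0A
  exact hUQ (show (⟨z, hzA⟩ : affineSpan ℝ Q) ∈ Subtype.val ⁻¹' U from hz)

lemma mem_extremePoints_dualSet {f : Submodule.span ℝ Q →L[ℝ] ℝ}
    (hf : f ∈ extremePoints ℝ (polarLe (Subtype.val ⁻¹' Q : Set (Submodule.span ℝ Q)))) :
    (f : Module.Dual ℝ (Submodule.span ℝ Q)) ∈ extremePoints ℝ (dualSet Q) := by
  have hdual : dualSet Q = LinearMap.toContinuousLinearMap.symm ''
      polarLe (Subtype.val ⁻¹' Q : Set (Submodule.span ℝ Q)) := by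
    rw [LinearEquiv.image_symm_eq_preimage]
    rfl
  rw [hdual, ← image_extremePoints]
  exact ⟨f, hf, rfl⟩

theorem exists_mem_extremePoints_dualSet_eq {W : Set (Fin n → ℝ)} (hQW : Q = convexHull ℝ W)
    (hQ : IsCompact Q) (h0 : (0 : Fin n → ℝ) ∈ intrinsicInterior ℝ Q) {w : Fin n → ℝ}
    (hw : w ∈ Submodule.span ℝ Q) {s : ℝ} (hs : 0 < s)
    (hleast : IsLeast {t | 0 ≤ t ∧ w ∈ t • Q} s) :
    ∃ φ ∈ extremePoints ℝ (dualSet Q), φ ⟨w, hw⟩ = s ∧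
      ∃ w₀ ∈ W, ∃ hw₀ : w₀ ∈ Submodule.span ℝ Q, φ ⟨w₀, hw₀⟩ = 1 := by
  set C : Set (Submodule.span ℝ Q) := Subtype.val ⁻¹' Q
  have hC0 : C ∈ 𝓝 0 := preimage_val_mem_nhds_zero h0
  have hCconv : Convex ℝ C := (hQW ▸ convex_convexHull ℝ W).linear_preimage (Submodule.subtype _)
  have hCcomp : IsCompact C := by
    rwa [Subtype.isCompact_iff, Set.image_preimage_eq_of_subset (by simp [Submodule.subset_span])]
  have hleastC : IsLeast {t | 0 ≤ t ∧ (⟨w, hw⟩ : Submodule.span ℝ Q) ∈ t • C} s := by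
    simpa only [C, mem_smul_preimage_val_iff] using hleast
  obtain ⟨f, hf, hfw⟩ :=
    exists_mem_extremePoints_polarLe_apply_eq hCconv hCcomp.isClosed hC0 hs hleastC
  have hf0 : f ≠ 0 := by
    rintro rfl
    exact hs.ne (by simpa using hfw)
  obtain ⟨c, hc, hfc⟩ :=
    exists_apply_eq_one_of_mem_extremePoints_polarLe hCcomp ⟨0, mem_of_mem_nhds hC0⟩ hf hf0
  obtain ⟨ψ, hψ⟩ := LinearMap.exists_extend (f : Submodule.span ℝ Q →ₗ[ℝ] ℝ)
  have hψf (a : Submodule.span ℝ Q) : ψ a = f a := LinearMap.congr_fun hψ a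
  obtain ⟨w₀, hw₀W, hcw₀⟩ := (ψ.convexOn convex_univ).exists_ge_of_mem_convexHull
    (Set.subset_univ W) (show (c : Fin n → ℝ) ∈ convexHull ℝ W from hQW ▸ hc)
  have hw₀Q : w₀ ∈ Q := hQW ▸ subset_convexHull ℝ W hw₀W
  refine ⟨f, mem_extremePoints_dualSet hf, hfw, w₀, hw₀W, Submodule.subset_span hw₀Q,
    le_antisymm (hf.1 _ hw₀Q) ?_⟩
  calc (1 : ℝ) = ψ c := by rw [hψf, hfc]
    _ ≤ ψ w₀ := hcw₀
    _ = f ⟨w₀, Submodule.subset_span hw₀Q⟩ := hψf ⟨w₀, _⟩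

end DualSet

section Gorenstein

lemma image_sub_smul_convexHull {E : Type*} [AddCommGroup E] [Module ℝ E] (k : ℝ) (m : E)
    (S : Set E) :
    (fun x => x - m) '' (k • convexHull ℝ S) = convexHull ℝ ((fun v => k • v - m) '' S) := by
  let f : E →ᵃ[ℝ] E := (k • LinearMap.id).toAffineMap - AffineMap.const ℝ E m
  rw [← Set.image_smul, Set.image_image]
  exact f.image_convexHull S

lemma mem_intrinsicInterior_of_zero_mem_image_sub {S : Set (Fin n → ℝ)} {m : Fin n → ℝ}
    (h : 0 ∈ intrinsicInterior ℝ ((fun x => x - m) '' S)) : m ∈ intrinsicInterior ℝ S := by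
  have htrans : (fun x => x - m) = ⇑(AffineEquiv.constVAdd ℝ (Fin n → ℝ) (-m)) := by
    funext x
    simp [sub_eq_neg_add]
  rw [htrans, AffineEquiv.intrinsicInterior_image] at h
  obtain ⟨y, hy, hy0⟩ := h
  rwa [← neg_add_eq_zero.1 (show -m + y = 0 from hy0)] at hy

variable {P : Set (Fin n → ℝ)} {k : ℕ} {m : Fin n → ℝ}

lemma sub_smul_emb_mem_cone_iff (hk : (k : ℝ) ≠ 0) (x : Fin (n + 1) → ℝ) (l : ℝ) :
    x - l • emb ((k : ℝ)⁻¹ • m) ∈ cone P ↔ l ≤ x (Fin.last n) ∧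
      (k : ℝ) • Fin.init x - x (Fin.last n) • m ∈
        (x (Fin.last n) - l) • ((fun y => y - m) '' ((k : ℝ) • P)) := by
  have hscale : (k : ℝ) • (Fin.init x - l • (k : ℝ)⁻¹ • m) = (k : ℝ) • Fin.init x - l • m := by
    rw [smul_sub, smul_comm (k : ℝ) l, smul_inv_smul₀ hk]
  simp only [mem_cone_iff, eq_smul_emb_iff, Set.mem_smul_set, Set.mem_image, Pi.sub_apply,
    Pi.smul_apply, emb_last, smul_eq_mul, mul_one, sub_nonneg, true_and, exists_exists_and_eq_and]
  refine and_congr_right fun _ => exists_congr fun a => and_congr_right fun _ => ?_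
  rw [show Fin.init (x - l • emb ((k : ℝ)⁻¹ • m)) = Fin.init x - l • (k : ℝ)⁻¹ • m by
      funext j; simp [Fin.init], ← (smul_right_injective _ hk).eq_iff, hscale]
  constructor <;> intro e <;> linear_combination (norm := module) -e

lemma exists_int_eq_mul_add_of_isLeast (hP : IsLatPolytope P) (hk : 0 < k)
    (hrefl : IsReflexive ((fun x => x - m) '' ((k : ℝ) • P))) {y : Fin n → ℝ} (hy : IsLat y)
    (h : ℤ) {s : ℝ} (hs : 0 < s)
    (hleast : IsLeast {t | 0 ≤ t ∧ (k : ℝ) • y - (h : ℝ) • m ∈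
      t • ((fun x => x - m) '' ((k : ℝ) • P))} s) :
    ∃ z : ℤ, s = k * z + h := by
  obtain ⟨V, hV, rfl⟩ := hP
  set Q := (fun x => x - m) '' ((k : ℝ) • convexHull ℝ (V : Set (Fin n → ℝ)))
  have hQ : IsCompact Q := (V.finite_toSet.isCompact_convexHull (𝕜 := ℝ)).smul (k : ℝ)
    |>.image (continuous_id.sub continuous_const)
  have hw : (k : ℝ) • y - (h : ℝ) • m ∈ Submodule.span ℝ Q := by
    obtain ⟨q, hq, hqw⟩ := hleast.1.2
    exact hqw ▸ Submodule.smul_mem _ _ (Submodule.subset_span hq)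
  obtain ⟨φ, hφ, hφw, _, ⟨v, hv, rfl⟩, hw₀, hφw₀⟩ := exists_mem_extremePoints_dualSet_eq
    (image_sub_smul_convexHull _ _ _) hQ hrefl.2.1 hw hs hleast
  have hu : y - (h : ℝ) • v ∈ Submodule.span ℝ Q := by
    have hku : y - (h : ℝ) • v =
        (k : ℝ)⁻¹ • (((k : ℝ) • y - (h : ℝ) • m) - (h : ℝ) • ((k : ℝ) • v - m)) := by
      rw [eq_inv_smul_iff₀ (by positivity)]
      module
    rw [hku]
    exact Submodule.smul_mem _ _ (Submodule.sub_mem _ hw (Submodule.smul_mem _ _ hw₀))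
  obtain ⟨z, hz⟩ := hrefl.2.2 φ hφ ⟨_, hu⟩ (hy.sub ((hV v hv).intCast_smul h))
  have hdecomp : (⟨_, hw⟩ : Submodule.span ℝ Q) =
      (k : ℝ) • ⟨_, hu⟩ + (h : ℝ) • ⟨_, hw₀⟩ := by
    ext1
    simp only [Submodule.coe_add, Submodule.coe_smul]
    module
  refine ⟨z, ?_⟩
  rw [← hφw, hdecomp, map_add, map_smul, map_smul, hz, hφw₀, smul_eq_mul, smul_eq_mul, mul_one]

lemma isLat_natCast_smul_emb_inv_smul (hk : (k : ℝ) ≠ 0) (hm : IsLat m) :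
    IsLat ((k : ℝ) • emb ((k : ℝ)⁻¹ • m)) := fun i => by
  refine Fin.lastCases ⟨k, by simp⟩ (fun j => ?_) i
  obtain ⟨a, ha⟩ := hm j
  exact ⟨a, by simp [ha, hk]⟩

theorem isLat_epsP_of_isReflexive (hP : IsLatPolytope P) (hk : 0 < k) (hm : IsLat m)
    (hrefl : IsReflexive ((fun x => x - m) '' ((k : ℝ) • P))) {x : Fin (n + 1) → ℝ}
    (hx : x ∈ latt (cone P)) : IsLat (epsP ((k : ℝ)⁻¹ • m) P x) := by
  have hkR : (k : ℝ) ≠ 0 := by positivity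
  obtain ⟨hxC, hxL⟩ := hx
  obtain ⟨h, hh⟩ := hxL (Fin.last n)
  have hmax := isGreatest_setOf_sub_smul_emb_mem_cone ((k : ℝ)⁻¹ • m) hP.isCompact hxC
  set lam := sSup {l : ℝ | x - l • emb ((k : ℝ)⁻¹ • m) ∈ cone P}
  have hleast : IsLeast {t | 0 ≤ t ∧ (k : ℝ) • Fin.init x - (h : ℝ) • m ∈
      t • ((fun y => y - m) '' ((k : ℝ) • P))} (h - lam) := by
    obtain ⟨hle, hmem⟩ := (sub_smul_emb_mem_cone_iff hkR x lam).1 hmax.1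
    refine ⟨⟨by linarith, hh ▸ hmem⟩, fun t ⟨ht, hmem⟩ => ?_⟩
    have := hmax.2 ((sub_smul_emb_mem_cone_iff hkR x (h - t)).2
      ⟨by linarith, by rwa [hh, sub_sub_cancel]⟩)
    linarith
  rcases hleast.1.1.eq_or_lt with hs0 | hspos
  · obtain ⟨c, -, hc⟩ := hs0 ▸ hleast.1.2
    have hkx : (k : ℝ) • Fin.init x = (h : ℝ) • m := by
      simpa [eq_comm, sub_eq_zero] using hc
    have hlam : lam = h := by linarith
    have hx : x = lam • emb ((k : ℝ)⁻¹ • m) := by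
      refine eq_smul_emb_iff.2 ⟨by rw [hh, hlam], ?_⟩
      rw [hlam, smul_comm, ← hkx, inv_smul_smul₀ hkR]
    show IsLat (x - lam • emb ((k : ℝ)⁻¹ • m))
    rw [← hx, sub_self]
    exact isLat_zero
  · obtain ⟨z, hz⟩ := exists_int_eq_mul_add_of_isLeast hP hk hrefl hxL.init h hspos hleast
    have heps : epsP ((k : ℝ)⁻¹ • m) P x = x + (z : ℝ) • ((k : ℝ) • emb ((k : ℝ)⁻¹ • m)) := by
      have hlam : lam = -(k * z) := by linarith
      show x - lam • _ = _
      rw [hlam]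
      module
    rw [heps]
    exact hxL.add ((isLat_natCast_smul_emb_inv_smul hkR hm).intCast_smul z)

end Gorenstein

theorem gorenstein_pllenv_eq_general {n : ℕ} (P : Set (Fin n → ℝ))
    (k : ℕ) (hP : IsGorenstein P k) (m : Fin n → ℝ)
    (hmUnique : ∀ m' : Fin n → ℝ, IsLat m' → m' ∈ intrinsicInterior ℝ ((k : ℝ) • P) → m' = m) :
    pllenv ((k : ℝ)⁻¹ • m) P = latt (plenv ((k : ℝ)⁻¹ • m) P) := by
  obtain ⟨hPlat, hk, m', hm', hrefl⟩ := hP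
  obtain rfl : m' = m := hmUnique m' hm' (mem_intrinsicInterior_of_zero_mem_image_sub hrefl.2.1)
  exact pllenv_eq_latt_plenv _ hPlat.isCompact fun x hx =>
    isLat_epsP_of_isReflexive hPlat hk hm' hrefl hx

/-- Proposition 5.7 (Gorenstein polytopes have lattice `p`-lower lattice
envelopes). -/
theorem gorenstein_pllenv_eq {n : ℕ} (hn : 1 ≤ n) (P : Set (Fin n → ℝ))
    (k : ℕ) (hP : IsGorenstein P k) (m : Fin n → ℝ) (hmLat : IsLat m)
    (hmInt : m ∈ intrinsicInterior ℝ ((k : ℝ) • P))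
    (hmUnique : ∀ m' : Fin n → ℝ, IsLat m' → m' ∈ intrinsicInterior ℝ ((k : ℝ) • P) → m' = m) :
    pllenv ((k : ℝ)⁻¹ • m) P = latt (plenv ((k : ℝ)⁻¹ • m) P) :=
  gorenstein_pllenv_eq_general P k hP m hmUnique

end ArxivFreeSum
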